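/- Let H be a finite-dimensional Hopf algebra over a field k with S² = id_H and dim_k(H)·1 ≠ 0 in k (equivalently, H semisimple and cosemisimple). Let (e_i)_{i=1..n} be a k-basis of H with dual basis (eⁱ) of H⁎. Then the element t := Σᵢ eⁱ((e_i)₁)·(e_i)₂ of H equals Σᵢ eⁱ((e_i)₂)·(e_i)₁, is nonzero, is both a left and a right integral in H, and is cocommutative (t₁ ⊗ t₂ = t₂ ⊗ t₁). -/

import Mathlib

/-!
Helper definitions for Sweedler-notation expressions in a Hopf algebra `H` over a field `k`.
-/

open TensorProduct

variable {k H : Type*} [Field k] [Ring H] [HopfAlgebra k H]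

/-- `swl f h = f(h₁) • h₂` in Sweedler notation. -/
noncomputable def swl (f : H →ₗ[k] k) : H →ₗ[k] H :=
  (TensorProduct.lid k H).toLinearMap ∘ₗ (f.rTensor H) ∘ₗ Coalgebra.comul

/-- `swr f h = f(h₂) • h₁` in Sweedler notation. -/
noncomputable def swr (f : H →ₗ[k] k) : H →ₗ[k] H :=
  (TensorProduct.rid k H).toLinearMap ∘ₗ (f.lTensor H) ∘ₗ Coalgebra.comul

/-- `sw2 f g h = f(h₁) * g(h₂)`, an element of `H`, in Sweedler notation. -/
noncomputable def sw2 (f g : H →ₗ[k] H) : H →ₗ[k] H :=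
  (LinearMap.mul' k H) ∘ₗ (TensorProduct.map f g) ∘ₗ Coalgebra.comul

/-- `sw2k f g h = f(h₁) * g(h₂)`, a scalar, in Sweedler notation. -/
noncomputable def sw2k (f g : H →ₗ[k] k) : H →ₗ[k] k :=
  (LinearMap.mul' k k) ∘ₗ (TensorProduct.map f g) ∘ₗ Coalgebra.comul

/-- `comul3 h = (h₁ ⊗ h₂) ⊗ h₃`, the iterated comultiplication `(Δ ⊗ id)Δ`. -/
noncomputable def comul3 : H →ₗ[k] (H ⊗[k] H) ⊗[k] H :=
  (LinearMap.rTensor H Coalgebra.comul) ∘ₗ Coalgebra.comul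

/-- `sw3 f g e h = f(h₁) * g(h₂) * e(h₃)`, an element of `H`, in Sweedler notation. -/
noncomputable def sw3 (f g e : H →ₗ[k] H) : H →ₗ[k] H :=
  (LinearMap.mul' k H) ∘ₗ
    (TensorProduct.map ((LinearMap.mul' k H) ∘ₗ TensorProduct.map f g) e) ∘ₗ comul3


/-!
Write `ρ f = swr f : x ↦ x₁ f(x₂)` and `λ f = swl f : x ↦ f(x₁) x₂`. For every functional `f`,
`f t = Tr (ρ f)` and `f t' = Tr (λ f)`, where `t' = Σᵢ eⁱ((eᵢ)₂)(eᵢ)₁`. Since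
`(f ⊗ g)(Δt) = Tr (ρ f ∘ ρ g)`, cocommutativity of `t` is cyclicity of the trace.
For `h ∈ H`, the identity `Σ S(h₁)h₂ ⊗ h₃ = 1 ⊗ h` gives `ρ (f(h ·)) = Σ S(h₁) · ρ f (h₂ ·)`, so by
cyclicity `f(ht) = Tr (ρ f ∘ (Σ h₂S(h₁) ·))`, and `Σ h₂S(h₁) = ε(h)` because `S² = id`. Right
multiplication and `t'` are handled alike. Finally `ε(t') t = t t' = ε(t) t'` and
`ε(t) = ε(t') = dim H ≠ 0`.
-/

open Coalgebra (Repr comul counit)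
open HopfAlgebra (antipode)
open LinearMap (mulLeft mulRight trace)
open scoped Coalgebra

lemma Module.eq_of_forall_dual_apply_eq {R V : Type*} [CommRing R] [AddCommGroup V] [Module R V]
    [Module.Projective R V] {x y : V} (h : ∀ f : Module.Dual R V, f x = f y) : x = y := by
  rw [← sub_eq_zero, ← Module.forall_dual_apply_eq_zero_iff R]
  intro f
  rw [map_sub, h, sub_self]

lemma TensorProduct.eq_of_forall_mul'_map_eq {R M : Type*} [CommRing R] [AddCommGroup M]
    [Module R M] [Module.Free R M] {z w : M ⊗[R] M}
    (h : ∀ f g : Module.Dual R M,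
      LinearMap.mul' R R (TensorProduct.map f g z) = LinearMap.mul' R R (TensorProduct.map f g w)) :
    z = w := by
  let b := Module.Free.chooseBasis R M
  have coord (x : M ⊗[R] M) (i j) : (b.tensorProduct b).repr x (i, j)
      = LinearMap.mul' R R (TensorProduct.map (b.coord i) (b.coord j) x) := by
    induction x using TensorProduct.induction_on with
    | zero => simp
    | tmul x y => simp [Module.Basis.tensorProduct_repr_tmul_apply, mul_comm]
    | add u v hu hv => simp [hu, hv]
  exact (b.tensorProduct b).ext_elem fun ⟨i, j⟩ => by rw [coord, coord, h]

lemma LinearMap.trace_eq_sum_coord {R M ι : Type*} [CommRing R] [AddCommGroup M] [Module R M]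
    [Fintype ι] (b : Module.Basis ι R M) (F : M →ₗ[R] M) :
    trace R M F = ∑ i, b.coord i (F (b i)) := by
  classical
  simp [LinearMap.trace_eq_matrix_trace R b, Matrix.trace, LinearMap.toMatrix_apply]

section TraceMul

variable {R A : Type*} [CommRing R] [Ring A] [Algebra R A]

lemma trace_comp_mulLeft_smul_one (F : A →ₗ[R] A) (c : R) :
    trace R A (F ∘ₗ mulLeft R (c • (1 : A))) = c * trace R A F := by
  have : mulLeft R (c • (1 : A)) = c • LinearMap.id := by ext; simp
  rw [this, LinearMap.comp_smul, LinearMap.comp_id, map_smul, smul_eq_mul]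

lemma trace_comp_mulRight_smul_one (F : A →ₗ[R] A) (c : R) :
    trace R A (F ∘ₗ mulRight R (c • (1 : A))) = c * trace R A F := by
  have : mulRight R (c • (1 : A)) = c • LinearMap.id := by ext; simp
  rw [this, LinearMap.comp_smul, LinearMap.comp_id, map_smul, smul_eq_mul]

variable [Module.Free R A] [Module.Finite R A]

lemma trace_sum_mulLeft_comp_comp (F : A →ₗ[R] A) {κ : Type*} (s : Finset κ) (u v : κ → A) :
    trace R A (∑ i ∈ s, mulLeft R (u i) ∘ₗ F ∘ₗ mulLeft R (v i))
      = trace R A (F ∘ₗ mulLeft R (∑ i ∈ s, v i * u i)) := by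
  have hsum : mulLeft R (∑ i ∈ s, v i * u i) = ∑ i ∈ s, mulLeft R (v i * u i) := by
    ext; simp [Finset.sum_mul, mul_assoc]
  rw [hsum, ← Module.End.mul_eq_comp, Finset.mul_sum, map_sum, map_sum]
  refine Finset.sum_congr rfl fun i _ => ?_
  rw [Module.End.mul_eq_comp, LinearMap.trace_comp_comm', LinearMap.comp_assoc,
    ← LinearMap.mulLeft_mul]

lemma trace_sum_mulRight_comp_comp (F : A →ₗ[R] A) {κ : Type*} (s : Finset κ) (u v : κ → A) :
    trace R A (∑ i ∈ s, mulRight R (u i) ∘ₗ F ∘ₗ mulRight R (v i))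
      = trace R A (F ∘ₗ mulRight R (∑ i ∈ s, u i * v i)) := by
  have hsum : mulRight R (∑ i ∈ s, u i * v i) = ∑ i ∈ s, mulRight R (u i * v i) := by
    ext; simp [Finset.mul_sum, mul_assoc]
  rw [hsum, ← Module.End.mul_eq_comp, Finset.mul_sum, map_sum, map_sum]
  refine Finset.sum_congr rfl fun i _ => ?_
  rw [Module.End.mul_eq_comp, LinearMap.trace_comp_comm', LinearMap.comp_assoc,
    ← LinearMap.mulRight_mul]

end TraceMul

section Coalgebra

variable {R A : Type*} [CommSemiring R] [AddCommMonoid A] [Module R A] [Coalgebra R A]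
  {M : Type*} [AddCommMonoid M] [Module R M]

lemma sum_counit_right_smul_left {a : A} {κ : Type*} (r : Repr R a κ) :
    ∑ i ∈ r.index, counit (R := R) (r.right i) • r.left i = a := by
  have h := congrArg (TensorProduct.rid R A) (Coalgebra.sum_tmul_counit_eq r)
  simp only [map_sum, TensorProduct.rid_tmul, one_smul] at h
  exact h

lemma sum_sum_apply_tmul_eq_tmul (φ : A →ₗ[R] A →ₗ[R] M) (m : M)
    (hφ : ∀ a : A, TensorProduct.lift φ (comul a) = counit (R := R) a • m)
    {a : A} {κ ν : Type*} (r : Repr R a κ) (rr : (i : κ) → Repr R (r.right i) ν) :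
    ∑ i ∈ r.index, ∑ j ∈ (rr i).index, φ (r.left i) ((rr i).left j) ⊗ₜ[R] (rr i).right j
      = m ⊗ₜ[R] a := by
  have coassoc := Coalgebra.sum_tmul_tmul_eq r (fun i => ℛ R (r.left i)) rr
  replace coassoc := congrArg
    (fun z => (TensorProduct.lift φ).rTensor A ((TensorProduct.assoc R A A A).symm z)) coassoc
  simp only [map_sum, TensorProduct.assoc_symm_tmul, LinearMap.rTensor_tmul,
    TensorProduct.lift.tmul] at coassoc
  rw [← coassoc, ← congrArg (m ⊗ₜ[R] ·) (Coalgebra.sum_counit_smul r), TensorProduct.tmul_sum]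
  refine Finset.sum_congr rfl fun i _ => ?_
  rw [← TensorProduct.sum_tmul, ← TensorProduct.smul_tmul, ← hφ, ← (ℛ R (r.left i)).eq, map_sum]
  simp only [TensorProduct.lift.tmul]

lemma sum_sum_tmul_apply_eq_tmul (φ : A →ₗ[R] A →ₗ[R] M) (m : M)
    (hφ : ∀ a : A, TensorProduct.lift φ (comul a) = counit (R := R) a • m)
    {a : A} {κ ν : Type*} (r : Repr R a κ) (rl : (i : κ) → Repr R (r.left i) ν) :
    ∑ i ∈ r.index, ∑ j ∈ (rl i).index, (rl i).left j ⊗ₜ[R] φ ((rl i).right j) (r.right i)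
      = a ⊗ₜ[R] m := by
  have coassoc := Coalgebra.sum_tmul_tmul_eq r rl (fun i => ℛ R (r.right i))
  replace coassoc := congrArg (fun z => (TensorProduct.lift φ).lTensor A z) coassoc
  simp only [map_sum, LinearMap.lTensor_tmul, TensorProduct.lift.tmul] at coassoc
  rw [coassoc, ← congrArg (· ⊗ₜ[R] m) (sum_counit_right_smul_left r), TensorProduct.sum_tmul]
  refine Finset.sum_congr rfl fun i _ => ?_
  rw [← TensorProduct.tmul_sum, TensorProduct.smul_tmul, ← hφ, ← (ℛ R (r.right i)).eq, map_sum]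
  simp only [TensorProduct.lift.tmul]

end Coalgebra

section Hopf

variable {R A : Type*} [CommSemiring R] [Semiring A] [HopfAlgebra R A]

lemma HopfAlgebra.sum_right_mul_antipode_left_eq_smul
    (hS2 : ∀ a : A, antipode R (antipode R a) = a) {a : A} {κ : Type*} (r : Repr R a κ) :
    ∑ i ∈ r.index, r.right i * antipode R (r.left i) = counit (R := R) a • (1 : A) := by
  have hterm (i : κ) :
      r.right i * antipode R (r.left i) = antipode R (r.left i * antipode R (r.right i)) := by
    rw [HopfAlgebra.antipode_mul_antidistrib, hS2]
  simp only [hterm, ← map_sum, HopfAlgebra.sum_mul_antipode_eq_smul r, map_smul,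
    HopfAlgebra.antipode_one]

lemma HopfAlgebra.sum_antipode_right_mul_left_eq_smul
    (hS2 : ∀ a : A, antipode R (antipode R a) = a) {a : A} {κ : Type*} (r : Repr R a κ) :
    ∑ i ∈ r.index, antipode R (r.right i) * r.left i = counit (R := R) a • (1 : A) := by
  have hterm (i : κ) :
      antipode R (r.right i) * r.left i = antipode R (antipode R (r.left i) * r.right i) := by
    rw [HopfAlgebra.antipode_mul_antidistrib, hS2]
  simp only [hterm, ← map_sum, HopfAlgebra.sum_antipode_mul_eq_smul r, map_smul,
    HopfAlgebra.antipode_one]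

lemma lift_comul_eq_sum (φ : A →ₗ[R] A →ₗ[R] A) (a : A) :
    TensorProduct.lift φ (comul a) = ∑ i ∈ (ℛ R a).index, φ ((ℛ R a).left i) ((ℛ R a).right i) := by
  rw [← (ℛ R a).eq, map_sum]
  simp only [TensorProduct.lift.tmul]

lemma sum_antipode_tmul_one_mul_comul {a : A} {κ : Type*} (r : Repr R a κ) :
    ∑ i ∈ r.index, (antipode R (r.left i) ⊗ₜ[R] (1 : A)) * comul (r.right i)
      = (1 : A) ⊗ₜ[R] a := by
  rw [← sum_sum_apply_tmul_eq_tmul ((LinearMap.mul R A).comp (antipode R)) 1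
    (fun a => by simp [lift_comul_eq_sum, HopfAlgebra.sum_antipode_mul_eq_smul]) r
    (fun i => ℛ R (r.right i))]
  refine Finset.sum_congr rfl fun i _ => ?_
  rw [← (ℛ R (r.right i)).eq, Finset.mul_sum]
  simp [Algebra.TensorProduct.tmul_mul_tmul]

lemma sum_comul_mul_antipode_tmul_one (hS2 : ∀ a : A, antipode R (antipode R a) = a)
    {a : A} {κ : Type*} (r : Repr R a κ) :
    ∑ i ∈ r.index, comul (r.right i) * (antipode R (r.left i) ⊗ₜ[R] (1 : A))
      = (1 : A) ⊗ₜ[R] a := by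
  rw [← sum_sum_apply_tmul_eq_tmul ((LinearMap.mul R A).flip.comp (antipode R)) 1
    (fun a => by simp [lift_comul_eq_sum, HopfAlgebra.sum_right_mul_antipode_left_eq_smul hS2]) r
    (fun i => ℛ R (r.right i))]
  refine Finset.sum_congr rfl fun i _ => ?_
  rw [← (ℛ R (r.right i)).eq, Finset.sum_mul]
  simp [Algebra.TensorProduct.tmul_mul_tmul]

lemma sum_one_tmul_antipode_mul_comul (hS2 : ∀ a : A, antipode R (antipode R a) = a)
    {a : A} {κ : Type*} (r : Repr R a κ) :
    ∑ i ∈ r.index, ((1 : A) ⊗ₜ[R] antipode R (r.right i)) * comul (r.left i)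
      = a ⊗ₜ[R] (1 : A) := by
  rw [← sum_sum_tmul_apply_eq_tmul ((LinearMap.mul R A).flip.compl₂ (antipode R)) 1
    (fun a => by simp [lift_comul_eq_sum, HopfAlgebra.sum_antipode_right_mul_left_eq_smul hS2]) r
    (fun i => ℛ R (r.left i))]
  refine Finset.sum_congr rfl fun i _ => ?_
  rw [← (ℛ R (r.left i)).eq, Finset.mul_sum]
  simp [Algebra.TensorProduct.tmul_mul_tmul]

end Hopf

section Sweedler

lemma swr_apply_eq_sum (f : H →ₗ[k] k) {x : H} {κ : Type*} (r : Repr k x κ) :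
    swr f x = ∑ i ∈ r.index, f (r.right i) • r.left i := by
  simp [swr, ← r.eq]

lemma swl_apply_eq_sum (f : H →ₗ[k] k) {x : H} {κ : Type*} (r : Repr k x κ) :
    swl f x = ∑ i ∈ r.index, f (r.left i) • r.right i := by
  simp [swl, ← r.eq]

lemma apply_swl (f g : H →ₗ[k] k) (x : H) : f (swl g x) = g (swr f x) := by
  simp [swl_apply_eq_sum g (ℛ k x), swr_apply_eq_sum f (ℛ k x), mul_comm]

lemma swr_counit : swr (counit (R := k) (A := H)) = LinearMap.id := by
  ext x
  simp [swr_apply_eq_sum _ (ℛ k x), sum_counit_right_smul_left]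

lemma swl_counit : swl (counit (R := k) (A := H)) = LinearMap.id := by
  ext x
  simp [swl_apply_eq_sum _ (ℛ k x), Coalgebra.sum_counit_smul]

lemma swr_comp_swr (f g : H →ₗ[k] k) : swr f ∘ₗ swr g = swr (sw2k f g) := by
  ext x
  have coassoc := Coalgebra.sum_tmul_tmul_eq (ℛ k x) (fun i => ℛ k ((ℛ k x).left i))
    (fun i => ℛ k ((ℛ k x).right i))
  replace coassoc := congrArg
    (fun z => TensorProduct.rid k H ((LinearMap.mul' k k ∘ₗ TensorProduct.map f g).lTensor H z))
    coassoc
  simp only [map_sum, LinearMap.lTensor_tmul, LinearMap.comp_apply, TensorProduct.map_tmul,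
    LinearMap.mul'_apply, TensorProduct.rid_tmul] at coassoc
  rw [LinearMap.comp_apply, swr_apply_eq_sum g (ℛ k x), swr_apply_eq_sum _ (ℛ k x), map_sum]
  refine (Finset.sum_congr rfl fun i _ => ?_).trans
    (coassoc.trans (Finset.sum_congr rfl fun i _ => ?_))
  · rw [map_smul, swr_apply_eq_sum f (ℛ k _), Finset.smul_sum]
    simp only [smul_smul, mul_comm]
  · rw [← Finset.sum_smul, sw2k, LinearMap.comp_apply, LinearMap.comp_apply, ← (ℛ k _).eq]
    simp only [map_sum, TensorProduct.map_tmul, LinearMap.mul'_apply]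

lemma rid_lTensor_tmul_mul (f : H →ₗ[k] k) (a c : H) (w : H ⊗[k] H) :
    TensorProduct.rid k H (f.lTensor H ((a ⊗ₜ[k] c) * w))
      = a * TensorProduct.rid k H ((f ∘ₗ mulLeft k c).lTensor H w) := by
  induction w using TensorProduct.induction_on with
  | zero => simp
  | tmul x y => simp [Algebra.TensorProduct.tmul_mul_tmul]
  | add u v hu hv => simp [mul_add, hu, hv]

lemma rid_lTensor_mul_tmul (f : H →ₗ[k] k) (a c : H) (w : H ⊗[k] H) :
    TensorProduct.rid k H (f.lTensor H (w * (a ⊗ₜ[k] c)))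
      = TensorProduct.rid k H ((f ∘ₗ mulRight k c).lTensor H w) * a := by
  induction w using TensorProduct.induction_on with
  | zero => simp
  | tmul x y => simp [Algebra.TensorProduct.tmul_mul_tmul]
  | add u v hu hv => simp [add_mul, hu, hv]

lemma lid_rTensor_tmul_mul (f : H →ₗ[k] k) (c a : H) (w : H ⊗[k] H) :
    TensorProduct.lid k H (f.rTensor H ((c ⊗ₜ[k] a) * w))
      = a * TensorProduct.lid k H ((f ∘ₗ mulLeft k c).rTensor H w) := by
  induction w using TensorProduct.induction_on with
  | zero => simp
  | tmul x y => simp [Algebra.TensorProduct.tmul_mul_tmul]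
  | add u v hu hv => simp [mul_add, hu, hv]

lemma swr_comp_mulLeft (f : H →ₗ[k] k) {h : H} {κ : Type*} (r : Repr k h κ) :
    swr (f ∘ₗ mulLeft k h) = ∑ i ∈ r.index,
      mulLeft k (antipode k (r.left i)) ∘ₗ swr f ∘ₗ mulLeft k (r.right i) := by
  ext x
  calc swr (f ∘ₗ mulLeft k h) x
      = TensorProduct.rid k H (f.lTensor H ((1 ⊗ₜ[k] h) * comul x)) := by
        rw [rid_lTensor_tmul_mul, one_mul]; rfl
    _ = TensorProduct.rid k H (f.lTensor H
          ((∑ i ∈ r.index, (antipode k (r.left i) ⊗ₜ[k] (1 : H)) * comul (r.right i)) *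
            comul x)) := by
        rw [sum_antipode_tmul_one_mul_comul]
    _ = _ := by
        simp only [Finset.sum_mul, map_sum, mul_assoc, ← Bialgebra.comul_mul, rid_lTensor_tmul_mul,
          LinearMap.mulLeft_one, LinearMap.comp_id, LinearMap.sum_apply, LinearMap.comp_apply,
          LinearMap.mulLeft_apply]
        rfl

lemma swr_comp_mulRight (hS2 : ∀ a : H, antipode k (antipode k a) = a)
    (f : H →ₗ[k] k) {h : H} {κ : Type*} (r : Repr k h κ) :
    swr (f ∘ₗ mulRight k h) = ∑ i ∈ r.index,
      mulRight k (antipode k (r.left i)) ∘ₗ swr f ∘ₗ mulRight k (r.right i) := by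
  ext x
  calc swr (f ∘ₗ mulRight k h) x
      = TensorProduct.rid k H (f.lTensor H (comul x * (1 ⊗ₜ[k] h))) := by
        rw [rid_lTensor_mul_tmul, mul_one]; rfl
    _ = TensorProduct.rid k H (f.lTensor H (comul x *
          ∑ i ∈ r.index, comul (r.right i) * (antipode k (r.left i) ⊗ₜ[k] (1 : H)))) := by
        rw [sum_comul_mul_antipode_tmul_one hS2]
    _ = _ := by
        simp only [Finset.mul_sum, map_sum, ← mul_assoc, ← Bialgebra.comul_mul,
          rid_lTensor_mul_tmul, LinearMap.mulRight_one, LinearMap.comp_id, LinearMap.sum_apply,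
          LinearMap.comp_apply, LinearMap.mulRight_apply]
        rfl

lemma swl_comp_mulLeft (hS2 : ∀ a : H, antipode k (antipode k a) = a)
    (f : H →ₗ[k] k) {h : H} {κ : Type*} (r : Repr k h κ) :
    swl (f ∘ₗ mulLeft k h) = ∑ i ∈ r.index,
      mulLeft k (antipode k (r.right i)) ∘ₗ swl f ∘ₗ mulLeft k (r.left i) := by
  ext x
  calc swl (f ∘ₗ mulLeft k h) x
      = TensorProduct.lid k H (f.rTensor H ((h ⊗ₜ[k] 1) * comul x)) := by
        rw [lid_rTensor_tmul_mul, one_mul]; rfl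
    _ = TensorProduct.lid k H (f.rTensor H
          ((∑ i ∈ r.index, ((1 : H) ⊗ₜ[k] antipode k (r.right i)) * comul (r.left i)) *
            comul x)) := by
        rw [sum_one_tmul_antipode_mul_comul hS2]
    _ = _ := by
        simp only [Finset.sum_mul, map_sum, mul_assoc, ← Bialgebra.comul_mul, lid_rTensor_tmul_mul,
          LinearMap.mulLeft_one, LinearMap.comp_id, LinearMap.sum_apply, LinearMap.comp_apply,
          LinearMap.mulLeft_apply]
        rfl

end Sweedler

section Integral

variable (k) in
def IsLeftIntegral (t : H) : Prop := ∀ h : H, h * t = counit (R := k) h • t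

variable (k) in
def IsRightIntegral (t : H) : Prop := ∀ h : H, t * h = counit (R := k) h • t

lemma IsRightIntegral.eq_of_isLeftIntegral {t t' : H} (ht : IsRightIntegral k t)
    (ht' : IsLeftIntegral k t') (hcounit : counit (R := k) t = counit (R := k) t')
    (hne : counit (R := k) t ≠ 0) : t = t' := by
  have hsmul : counit (R := k) t • t = counit (R := k) t • t' := by
    rw [← ht' t, ht t', hcounit]
  exact smul_right_injective H hne hsmul

section FiniteDimensional

variable [FiniteDimensional k H]

lemma trace_swr_comp_mulLeft (hS2 : ∀ a : H, antipode k (antipode k a) = a)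
    (f : H →ₗ[k] k) (h : H) :
    trace k H (swr (f ∘ₗ mulLeft k h)) = counit (R := k) h * trace k H (swr f) := by
  rw [swr_comp_mulLeft f (ℛ k h), trace_sum_mulLeft_comp_comp,
    HopfAlgebra.sum_right_mul_antipode_left_eq_smul hS2, trace_comp_mulLeft_smul_one]

lemma trace_swr_comp_mulRight (hS2 : ∀ a : H, antipode k (antipode k a) = a)
    (f : H →ₗ[k] k) (h : H) :
    trace k H (swr (f ∘ₗ mulRight k h)) = counit (R := k) h * trace k H (swr f) := by
  rw [swr_comp_mulRight hS2 f (ℛ k h), trace_sum_mulRight_comp_comp,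
    HopfAlgebra.sum_antipode_mul_eq_smul, trace_comp_mulRight_smul_one]

lemma trace_swl_comp_mulLeft (hS2 : ∀ a : H, antipode k (antipode k a) = a)
    (f : H →ₗ[k] k) (h : H) :
    trace k H (swl (f ∘ₗ mulLeft k h)) = counit (R := k) h * trace k H (swl f) := by
  rw [swl_comp_mulLeft hS2 f (ℛ k h), trace_sum_mulLeft_comp_comp,
    HopfAlgebra.sum_mul_antipode_eq_smul, trace_comp_mulLeft_smul_one]

variable {t : H}

lemma isLeftIntegral_of_apply_eq_trace_swr (hS2 : ∀ a : H, antipode k (antipode k a) = a)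
    (ht : ∀ f : H →ₗ[k] k, f t = trace k H (swr f)) : IsLeftIntegral k t := fun h =>
  Module.eq_of_forall_dual_apply_eq (R := k) fun f => by
    rw [map_smul, smul_eq_mul, ht, ← trace_swr_comp_mulLeft hS2, ← ht]
    rfl

lemma isRightIntegral_of_apply_eq_trace_swr (hS2 : ∀ a : H, antipode k (antipode k a) = a)
    (ht : ∀ f : H →ₗ[k] k, f t = trace k H (swr f)) : IsRightIntegral k t := fun h =>
  Module.eq_of_forall_dual_apply_eq (R := k) fun f => by
    rw [map_smul, smul_eq_mul, ht, ← trace_swr_comp_mulRight hS2, ← ht]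
    rfl

lemma isLeftIntegral_of_apply_eq_trace_swl (hS2 : ∀ a : H, antipode k (antipode k a) = a)
    (ht : ∀ f : H →ₗ[k] k, f t = trace k H (swl f)) : IsLeftIntegral k t := fun h =>
  Module.eq_of_forall_dual_apply_eq (R := k) fun f => by
    rw [map_smul, smul_eq_mul, ht, ← trace_swl_comp_mulLeft hS2, ← ht]
    rfl

lemma comm_comul_eq_self_of_apply_eq_trace_swr (ht : ∀ f : H →ₗ[k] k, f t = trace k H (swr f)) :
    TensorProduct.comm k H H (comul t) = comul t := by
  have pairing (f g : H →ₗ[k] k) :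
      LinearMap.mul' k k (TensorProduct.map f g (comul t)) = trace k H (swr f ∘ₗ swr g) := by
    rw [swr_comp_swr, ← ht]
    rfl
  refine TensorProduct.eq_of_forall_mul'_map_eq fun f g => ?_
  have swap : LinearMap.mul' k k (TensorProduct.map f g (TensorProduct.comm k H H (comul t)))
      = LinearMap.mul' k k (TensorProduct.map g f (comul t)) := by
    induction comul (R := k) t using TensorProduct.induction_on with
    | zero => simp
    | tmul x y => simp [mul_comm]
    | add u v hu hv => simp only [map_add, hu, hv]
  rw [swap, pairing, pairing, LinearMap.trace_comp_comm']

end FiniteDimensional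

variable {ι : Type*} [Fintype ι]

lemma apply_sum_swl_basis (b : Module.Basis ι k H) (f : H →ₗ[k] k) :
    f (∑ i, swl (b.coord i) (b i)) = trace k H (swr f) := by
  simp [LinearMap.trace_eq_sum_coord b, apply_swl]

lemma apply_sum_swr_basis (b : Module.Basis ι k H) (f : H →ₗ[k] k) :
    f (∑ i, swr (b.coord i) (b i)) = trace k H (swl f) := by
  simp [LinearMap.trace_eq_sum_coord b, apply_swl]

end Integral

/-- `H` finite-dimensional Hopf algebra over `k` with `S² = id` and
`dim_k(H)·1 ≠ 0` in `k`.  For a basis `(eᵢ)` with dual basis `(eⁱ)`, the element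
`t = Σᵢ eⁱ((eᵢ)₁)·(eᵢ)₂` equals `Σᵢ eⁱ((eᵢ)₂)·(eᵢ)₁`, is nonzero, is a two-sided
integral in `H`, and is cocommutative. -/
theorem statement18 [FiniteDimensional k H]
    (hS2 : ∀ h : H, HopfAlgebra.antipode (R := k) (HopfAlgebra.antipode (R := k) h) = h)
    (hdim : (Module.finrank k H : k) ≠ 0)
    {ι : Type*} [Fintype ι] (b : Module.Basis ι k H)
    (t : H) (hT : t = ∑ i : ι, swl (b.coord i) (b i)) :
    t = (∑ i : ι, swr (b.coord i) (b i)) ∧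
    t ≠ 0 ∧
    (∀ h : H, h * t = Coalgebra.counit (R := k) h • t) ∧
    (∀ h : H, t * h = Coalgebra.counit (R := k) h • t) ∧
    (TensorProduct.comm k H H) (Coalgebra.comul (R := k) t) = Coalgebra.comul (R := k) t := by
  have ht : ∀ f : H →ₗ[k] k, f t = trace k H (swr f) := hT ▸ apply_sum_swl_basis b
  have ht' := apply_sum_swr_basis b
  have hcounit : counit (R := k) t = Module.finrank k H := by
    rw [ht, swr_counit, LinearMap.trace_id]
  have hcounit' : counit (R := k) t = counit (R := k) (∑ i, swr (b.coord i) (b i)) := by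
    rw [hcounit, ht', swl_counit, LinearMap.trace_id]
  have hright := isRightIntegral_of_apply_eq_trace_swr hS2 ht
  have hleft' := isLeftIntegral_of_apply_eq_trace_swl hS2 ht'
  refine ⟨hright.eq_of_isLeftIntegral hleft' hcounit' (hcounit ▸ hdim), fun h0 => hdim ?_,
    isLeftIntegral_of_apply_eq_trace_swr hS2 ht, hright, comm_comul_eq_self_of_apply_eq_trace_swr ht⟩
  rw [← hcounit, h0, map_zero]
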